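/- arXiv:1909.03433 — 2 statements merged into one kernel-verified Lean document; each statement's English description precedes it below -/
import Mathlib

section
/- Fix x, points y₁, …, yₙ ∈ ℝ^d, a matrix A ∈ ℝ^{d×d}, a function h(x, ·) : ℝ^d → ℝ continuous, a compact set Ξ ⊆ ℝ^d containing ξ̂ᵢ := y_{i+1} − A yᵢ for all i, and ε₁ > 0. Then sup over probability measures F₁,…,F_{n−1} on Ξ satisfying (1/(n−1)) Σᵢ ∫ ‖ξ − ξ̂ᵢ‖² dFᵢ(ξ) ≤ ε₁ of (1/(n−1)) Σᵢ ∫ h(x, A yₙ + ξ) dFᵢ(ξ) equals inf_{u ≥ 0} [ u ε₁ + max_{ξ₁,…,ξ_{n−1} ∈ Ξ} (1/(n−1)) Σᵢ ( h(x, A yₙ + ξᵢ) − u ‖ξᵢ − ξ̂ᵢ‖² ) ]. -/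
/-!
Tuples of probability measures carried by `Ξ` give a convex set `K ⊆ ℝ²` of pairs
(expected cost, expected reward). Dirac tuples put every pair coming from a point tuple of `Ξ`
into `K`, and an integral against a probability measure on `Ξ` never exceeds the maximum over
`Ξ`, so `sup_{q ∈ K} (q.2 - u q.1)` is the inner maximum over point tuples. Strong duality is
thus Lagrange duality in the plane: separating `K` from the open quadrant `{a < ε, b > S}`,
`S` the primal value, gives a supporting line of slope `u ≥ 0`, which is not vertical because
the Dirac tuple at the `ξ̂ᵢ` has cost `0 < ε` (Slater).
-/

open MeasureTheory Set

lemma nonpos_of_forall_add_mul_lt {a b s : ℝ} (h : ∀ t : ℝ, 0 ≤ t → a + t * b < s) : b ≤ 0 := by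
  by_contra! hb
  have := h ((|s - a| + 1) / b) (by positivity)
  rw [div_mul_cancel₀ _ hb.ne'] at this
  linarith [le_abs_self (s - a)]

lemma ContinuousLinearMap.apply_prod_eq (f : ℝ × ℝ →L[ℝ] ℝ) (p : ℝ × ℝ) :
    f p = p.1 * f (1, 0) + p.2 * f (0, 1) := by
  conv_lhs => rw [show p = p.1 • ((1 : ℝ), (0 : ℝ)) + p.2 • ((0 : ℝ), (1 : ℝ)) by ext <;> simp]
  rw [map_add, map_smul, map_smul, smul_eq_mul, smul_eq_mul]

theorem Convex.exists_lagrange_multiplier {K : Set (ℝ × ℝ)} (hK : Convex ℝ K) {ε S : ℝ}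
    {q₀ : ℝ × ℝ} (hq₀ : q₀ ∈ K) (hslater : q₀.1 < ε) (hS : ∀ q ∈ K, q.1 ≤ ε → q.2 ≤ S) :
    ∃ u : ℝ, 0 ≤ u ∧ ∀ q ∈ K, q.2 - u * q.1 ≤ S - u * ε := by
  have hdisj : Disjoint (Iio ε ×ˢ Ioi S) K := by
    rw [Set.disjoint_left]
    rintro q ⟨hq1, hq2⟩ hqK
    exact (not_le.2 (mem_Ioi.1 hq2)) (hS q hqK hq1.le)
  obtain ⟨f, s, hfU, hfK⟩ := geometric_hahn_banach_open ((convex_Iio ε).prod (convex_Ioi S))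
    (isOpen_Iio.prod isOpen_Ioi) hK hdisj
  set α := f (1, 0)
  set β := f (0, 1)
  have hf : ∀ p, f p = p.1 * α + p.2 * β := f.apply_prod_eq
  have hα : 0 ≤ α := neg_nonpos.1 <|
    nonpos_of_forall_add_mul_lt (a := (ε - 1) * α + (S + 1) * β) (s := s) fun t ht => by
      have := hfU (ε - 1 - t, S + 1) ⟨by simp; linarith, by simp⟩
      rw [hf] at this; linarith
  have hβ : β ≤ 0 := nonpos_of_forall_add_mul_lt (a := (ε - 1) * α + (S + 1) * β) (s := s)
    fun t ht => by
      have := hfU (ε - 1, S + 1 + t) ⟨by simp, by simp; linarith⟩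
      rw [hf] at this; linarith
  have hβ0 : β ≠ 0 := by
    intro hβ0
    have h1 := hfU (q₀.1, S + 1) ⟨hslater, by simp⟩
    have h2 := hfK q₀ hq₀
    rw [hf] at h1 h2
    simp only [hβ0, mul_zero, add_zero] at h1 h2
    linarith
  have hcorner : ε * α + S * β ≤ s := by
    have hcl : closure (Iio ε ×ˢ Ioi S) ⊆ {p | f p ≤ s} :=
      closure_minimal (fun p hp => (hfU p hp).le) (isClosed_le f.continuous continuous_const)
    have hmem : (ε, S) ∈ closure (Iio ε ×ˢ Ioi S) := by
      rw [closure_prod_eq, closure_Iio, closure_Ioi]; exact ⟨mem_Iic.2 le_rfl, mem_Ici.2 le_rfl⟩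
    simpa [hf] using hcl hmem
  refine ⟨α / -β, div_nonneg hα (by linarith), fun q hq => ?_⟩
  have hβneg : 0 < -β := neg_pos.2 (lt_of_le_of_ne hβ hβ0)
  have hq := hfK q hq
  rw [hf] at hq
  rw [← sub_nonneg]
  have key : S - α / -β * ε - (q.2 - α / -β * q.1) =
      (q.1 * α + q.2 * β - (ε * α + S * β)) / -β := by
    field_simp; ring
  rw [key]
  exact div_nonneg (by linarith) hβneg.le

variable {E ι : Type*}

lemma integral_add_smul_measure [MeasurableSpace E] {f : E → ℝ} {μ ν : Measure E}
    (hμ : Integrable f μ) (hν : Integrable f ν) {a b : ℝ} (ha : 0 ≤ a) (hb : 0 ≤ b) :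
    ∫ ξ, f ξ ∂(ENNReal.ofReal a • μ + ENNReal.ofReal b • ν) =
      a * ∫ ξ, f ξ ∂μ + b * ∫ ξ, f ξ ∂ν := by
  rw [integral_add_measure (hμ.smul_measure ENNReal.ofReal_ne_top)
    (hν.smul_measure ENNReal.ofReal_ne_top), integral_smul_measure, integral_smul_measure,
    ENNReal.toReal_ofReal ha, ENNReal.toReal_ofReal hb, smul_eq_mul, smul_eq_mul]

variable [TopologicalSpace E] [Fintype ι] {Ξ : Set E} {κ : ℝ} {c : ι → E → ℝ} {g : E → ℝ}

lemma bddAbove_lagrangian_values (hΞ : IsCompact Ξ) (hc : ∀ i, Continuous (c i))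
    (hg : Continuous g) (u : ℝ) :
    BddAbove {r | ∃ ξs : ι → E, (∀ i, ξs i ∈ Ξ) ∧ r = κ * ∑ i, (g (ξs i) - u * c i (ξs i))} := by
  obtain ⟨B, hB⟩ := ((isCompact_univ_pi fun _ : ι => hΞ).image (show Continuous
    fun ξs : ι → E => κ * ∑ i, (g (ξs i) - u * c i (ξs i)) by fun_prop)).bddAbove
  exact ⟨B, fun r ⟨ξs, hξs, hr⟩ => hr ▸ hB ⟨ξs, fun i _ => hξs i, rfl⟩⟩

variable [MeasurableSpace E] [T2Space E] [OpensMeasurableSpace E]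

lemma Continuous.integrable_of_ae_mem_compact {f : E → ℝ} (hf : Continuous f) {Ξ : Set E}
    (hΞ : IsCompact Ξ) {μ : Measure E} [IsFiniteMeasure μ] (hμ : ∀ᵐ ξ ∂μ, ξ ∈ Ξ) :
    Integrable f μ := by
  simpa [IntegrableOn, Measure.restrict_eq_self_of_ae_mem hμ] using
    hf.continuousOn.integrableOn_compact (μ := μ) hΞ

lemma integral_le_of_forall_mem_le {f : E → ℝ} (hf : Continuous f) {Ξ : Set E} (hΞ : IsCompact Ξ)
    {μ : Measure E} [IsProbabilityMeasure μ] (hμ : ∀ᵐ ξ ∂μ, ξ ∈ Ξ) {B : ℝ}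
    (hB : ∀ ξ ∈ Ξ, f ξ ≤ B) : ∫ ξ, f ξ ∂μ ≤ B := by
  calc ∫ ξ, f ξ ∂μ ≤ ∫ _, B ∂μ :=
        integral_mono_ae (hf.integrable_of_ae_mem_compact hΞ hμ) (integrable_const B)
          (hμ.mono hB)
    _ = B := by simp

variable (Ξ κ c g) in
def costValueSet : Set (ℝ × ℝ) :=
  {q | ∃ F : ι → Measure E, (∀ i, IsProbabilityMeasure (F i)) ∧ (∀ i, F i Ξᶜ = 0) ∧
    q = (κ * ∑ i, ∫ ξ, c i ξ ∂F i, κ * ∑ i, ∫ ξ, g ξ ∂F i)}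

lemma mk_mem_costValueSet {ξs : ι → E} (hξs : ∀ i, ξs i ∈ Ξ) :
    (κ * ∑ i, c i (ξs i), κ * ∑ i, g (ξs i)) ∈ costValueSet Ξ κ c g :=
  ⟨fun i => Measure.dirac (ξs i), fun _ => inferInstance, fun i => by simp [hξs i],
    by simp [integral_dirac]⟩

lemma convex_costValueSet (hΞ : IsCompact Ξ) (hc : ∀ i, Continuous (c i)) (hg : Continuous g) :
    Convex ℝ (costValueSet Ξ κ c g) := by
  rintro _ ⟨F, hFp, hFΞ, rfl⟩ _ ⟨G, hGp, hGΞ, rfl⟩ a b ha hb hab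
  have hint : ∀ {f : E → ℝ}, Continuous f → ∀ {μ : Measure E} [IsProbabilityMeasure μ],
      μ Ξᶜ = 0 → Integrable f μ :=
    fun hf μ _ hμ => hf.integrable_of_ae_mem_compact hΞ (mem_ae_iff.2 hμ)
  have hmix : ∀ {f : E → ℝ}, Continuous f → ∀ i,
      ∫ ξ, f ξ ∂(ENNReal.ofReal a • F i + ENNReal.ofReal b • G i) =
        a * ∫ ξ, f ξ ∂F i + b * ∫ ξ, f ξ ∂G i :=
    fun hf i => integral_add_smul_measure (hint hf (hFΞ i)) (hint hf (hGΞ i)) ha hb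
  refine ⟨fun i => ENNReal.ofReal a • F i + ENNReal.ofReal b • G i, fun i => ⟨?_⟩,
    fun i => by simp [hFΞ i, hGΞ i], ?_⟩
  · simp [← ENNReal.ofReal_add ha hb, hab]
  · simp only [hmix (hc _), hmix hg, Finset.sum_add_distrib, ← Finset.mul_sum, Prod.smul_mk,
      Prod.mk_add_mk, smul_eq_mul]
    exact Prod.ext (by ring) (by ring)

lemma snd_sub_mul_fst_le_of_mem_costValueSet (hΞ : IsCompact Ξ) (hκ : 0 ≤ κ)
    (hc : ∀ i, Continuous (c i)) (hg : Continuous g) (u : ℝ) {q : ℝ × ℝ}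
    (hq : q ∈ costValueSet Ξ κ c g) :
    q.2 - u * q.1 ≤
      sSup {r | ∃ ξs : ι → E, (∀ i, ξs i ∈ Ξ) ∧ r = κ * ∑ i, (g (ξs i) - u * c i (ξs i))} := by
  obtain ⟨F, hFp, hFΞ, rfl⟩ := hq
  have hae : ∀ i, ∀ᵐ ξ ∂F i, ξ ∈ Ξ := fun i => mem_ae_iff.2 (hFΞ i)
  have hL : ∀ i, Continuous fun ξ => g ξ - u * c i ξ := fun i => by fun_prop
  choose z hzΞ hzmax using fun i =>
    hΞ.exists_isMaxOn (hae i).exists (hL i).continuousOn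
  have hsplit : ∀ i, ∫ ξ, (g ξ - u * c i ξ) ∂F i = ∫ ξ, g ξ ∂F i - u * ∫ ξ, c i ξ ∂F i :=
    fun i => by
      rw [integral_sub (hg.integrable_of_ae_mem_compact hΞ (hae i))
        (((hc i).integrable_of_ae_mem_compact hΞ (hae i)).const_mul u), integral_const_mul]
  calc κ * ∑ i, ∫ ξ, g ξ ∂F i - u * (κ * ∑ i, ∫ ξ, c i ξ ∂F i)
      = κ * ∑ i, ∫ ξ, (g ξ - u * c i ξ) ∂F i := by
        rw [Finset.sum_congr rfl fun i _ => hsplit i, Finset.sum_sub_distrib, ← Finset.mul_sum]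
        ring
    _ ≤ κ * ∑ i, (g (z i) - u * c i (z i)) :=
        mul_le_mul_of_nonneg_left (Finset.sum_le_sum fun i _ =>
          integral_le_of_forall_mem_le (hL i) hΞ (hae i) (hzmax i)) hκ
    _ ≤ _ := le_csSup (bddAbove_lagrangian_values hΞ hc hg u) ⟨z, hzΞ, rfl⟩

theorem sSup_expectation_eq_iInf_lagrangian (hΞ : IsCompact Ξ) (hκ : 0 ≤ κ)
    (hc : ∀ i, Continuous (c i)) (hg : Continuous g) {ε : ℝ} {ξ₀ : ι → E}
    (hξ₀ : ∀ i, ξ₀ i ∈ Ξ) (hslater : κ * ∑ i, c i (ξ₀ i) < ε) :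
    sSup {r : ℝ | ∃ F : ι → Measure E, (∀ i, IsProbabilityMeasure (F i)) ∧ (∀ i, F i Ξᶜ = 0) ∧
        κ * ∑ i, ∫ ξ, c i ξ ∂(F i) ≤ ε ∧ r = κ * ∑ i, ∫ ξ, g ξ ∂(F i)} =
    ⨅ u : {u : ℝ // 0 ≤ u}, ((u : ℝ) * ε + sSup {r : ℝ | ∃ ξs : ι → E, (∀ i, ξs i ∈ Ξ) ∧
        r = κ * ∑ i, (g (ξs i) - (u : ℝ) * c i (ξs i))}) := by
  set K := costValueSet Ξ κ c g
  set P := {r : ℝ | ∃ F : ι → Measure E, (∀ i, IsProbabilityMeasure (F i)) ∧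
    (∀ i, F i Ξᶜ = 0) ∧ κ * ∑ i, ∫ ξ, c i ξ ∂(F i) ≤ ε ∧ r = κ * ∑ i, ∫ ξ, g ξ ∂(F i)}
  set D := fun u : ℝ => sSup {r : ℝ | ∃ ξs : ι → E, (∀ i, ξs i ∈ Ξ) ∧
    r = κ * ∑ i, (g (ξs i) - u * c i (ξs i))}
  have hPK : ∀ r ∈ P, ∃ q ∈ K, q.1 ≤ ε ∧ r = q.2 :=
    fun r ⟨F, hFp, hFΞ, hcost, hr⟩ => ⟨_, ⟨F, hFp, hFΞ, rfl⟩, hcost, hr⟩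
  have hKP : ∀ q ∈ K, q.1 ≤ ε → q.2 ∈ P := by
    rintro _ ⟨F, hFp, hFΞ, rfl⟩ hcost
    exact ⟨F, hFp, hFΞ, hcost, rfl⟩
  have hweak : ∀ u : ℝ, 0 ≤ u → ∀ r ∈ P, r ≤ u * ε + D u := by
    rintro u hu r hr
    obtain ⟨q, hqK, hq1, rfl⟩ := hPK r hr
    have := snd_sub_mul_fst_le_of_mem_costValueSet hΞ hκ hc hg u hqK
    have := mul_le_mul_of_nonneg_left hq1 hu
    linarith
  have hq₀ := mk_mem_costValueSet (c := c) (g := g) (κ := κ) hξ₀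
  have hPne : P.Nonempty := ⟨_, hKP _ hq₀ hslater.le⟩
  have hPbdd : BddAbove P := ⟨0 * ε + D 0, hweak 0 le_rfl⟩
  obtain ⟨u, hu, hmult⟩ := (convex_costValueSet hΞ hc hg).exists_lagrange_multiplier hq₀
    hslater fun q hq hq1 => le_csSup hPbdd (hKP q hq hq1)
  have hDu : D u ≤ sSup P - u * ε := by
    refine csSup_le ⟨_, ξ₀, hξ₀, rfl⟩ ?_
    rintro _ ⟨ξs, hξs, rfl⟩
    have := hmult _ (mk_mem_costValueSet hξs)
    rw [Finset.sum_sub_distrib, mul_sub, ← Finset.mul_sum]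
    linarith
  refine le_antisymm (le_ciInf fun u => csSup_le hPne (hweak u u.2)) ?_
  refine (ciInf_le ⟨hPne.some, ?_⟩ (⟨u, hu⟩ : {u : ℝ // 0 ≤ u})).trans ?_
  · rintro _ ⟨v, rfl⟩
    exact hweak v v.2 _ hPne.some_mem
  · change u * ε + D u ≤ sSup P
    linarith

theorem inner_strong_duality_general {p d m : ℕ}
    (Ξ : Set (EuclideanSpace ℝ (Fin d))) (hΞc : IsCompact Ξ)
    (h : EuclideanSpace ℝ (Fin p) → EuclideanSpace ℝ (Fin d) → ℝ)
    (x : EuclideanSpace ℝ (Fin p)) (hh : Continuous (h x))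
    (y : Fin (m + 1) → EuclideanSpace ℝ (Fin d)) (A : Matrix (Fin d) (Fin d) ℝ)
    (hmem : ∀ i : Fin m,
      y i.succ - Matrix.toEuclideanLin A (y i.castSucc) ∈ Ξ)
    (ε₁ : ℝ) (hε : 0 < ε₁) :
    sSup {r : ℝ | ∃ F : Fin m → Measure (EuclideanSpace ℝ (Fin d)),
        (∀ i, IsProbabilityMeasure (F i)) ∧ (∀ i, F i Ξᶜ = 0) ∧
        (1 / (m : ℝ)) * ∑ i, ∫ ξ,
            ‖ξ - (y i.succ - Matrix.toEuclideanLin A (y i.castSucc))‖ ^ 2 ∂(F i) ≤ ε₁ ∧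
        r = (1 / (m : ℝ)) * ∑ i, ∫ ξ,
            h x (Matrix.toEuclideanLin A (y (Fin.last m)) + ξ) ∂(F i)} =
    ⨅ u : {u : ℝ // 0 ≤ u},
      ((u : ℝ) * ε₁ + sSup {r : ℝ | ∃ ξs : Fin m → EuclideanSpace ℝ (Fin d),
        (∀ i, ξs i ∈ Ξ) ∧
        r = (1 / (m : ℝ)) * ∑ i,
          (h x (Matrix.toEuclideanLin A (y (Fin.last m)) + ξs i) -
            (u : ℝ) * ‖ξs i - (y i.succ - Matrix.toEuclideanLin A (y i.castSucc))‖ ^ 2)}) := by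
  have h_duality := sSup_expectation_eq_iInf_lagrangian (ε := ε₁) (κ := 1 / (m : ℝ))
    (c := fun i ξ => ‖ξ - (y i.succ - Matrix.toEuclideanLin A (y i.castSucc))‖ ^ 2)
    (g := fun ξ => h x (Matrix.toEuclideanLin A (y (Fin.last m)) + ξ))
    hΞc (by positivity) (fun _ => by fun_prop) (hh.comp (continuous_const_add _)) hmem
    (by simpa using hε)
  exact h_duality

/-- Strong Lagrangian duality for the inner distributional maximization of the
Wasserstein-ball DRSO (Theorem 1 of the paper). -/
theorem inner_strong_duality {p d m : ℕ} (hm : 0 < m)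
    (Ξ : Set (EuclideanSpace ℝ (Fin d))) (hΞc : IsCompact Ξ)
    (h : EuclideanSpace ℝ (Fin p) → EuclideanSpace ℝ (Fin d) → ℝ)
    (x : EuclideanSpace ℝ (Fin p)) (hh : Continuous (h x))
    (y : Fin (m + 1) → EuclideanSpace ℝ (Fin d)) (A : Matrix (Fin d) (Fin d) ℝ)
    (hmem : ∀ i : Fin m,
      y i.succ - Matrix.toEuclideanLin A (y i.castSucc) ∈ Ξ)
    (ε₁ : ℝ) (hε : 0 < ε₁) :
    sSup {r : ℝ | ∃ F : Fin m → Measure (EuclideanSpace ℝ (Fin d)),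
        (∀ i, IsProbabilityMeasure (F i)) ∧ (∀ i, F i Ξᶜ = 0) ∧
        (1 / (m : ℝ)) * ∑ i, ∫ ξ,
            ‖ξ - (y i.succ - Matrix.toEuclideanLin A (y i.castSucc))‖ ^ 2 ∂(F i) ≤ ε₁ ∧
        r = (1 / (m : ℝ)) * ∑ i, ∫ ξ,
            h x (Matrix.toEuclideanLin A (y (Fin.last m)) + ξ) ∂(F i)} =
    ⨅ u : {u : ℝ // 0 ≤ u},
      ((u : ℝ) * ε₁ + sSup {r : ℝ | ∃ ξs : Fin m → EuclideanSpace ℝ (Fin d),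
        (∀ i, ξs i ∈ Ξ) ∧
        r = (1 / (m : ℝ)) * ∑ i,
          (h x (Matrix.toEuclideanLin A (y (Fin.last m)) + ξs i) -
            (u : ℝ) * ‖ξs i - (y i.succ - Matrix.toEuclideanLin A (y i.castSucc))‖ ^ 2)}) :=
  inner_strong_duality_general Ξ hΞc h x hh y A hmem ε₁ hε
end

section
/- Let ξ̂₁,…,ξ_{n−1} ∈ Ξ with Ξ ⊆ ℝ^d compact convex, g : ℝ^d → ℝ concave and continuous, ε₁ > 0. Then inf_{u ≥ 0} [ u ε₁ + max_{ξ₁,…,ξ_{n−1} ∈ Ξ} (1/(n−1)) Σᵢ ( g(ξᵢ) − u ‖ξᵢ − ξ̂ᵢ‖² ) ] = max { (1/(n−1)) Σᵢ g(ξᵢ) : ξᵢ ∈ Ξ, (1/(n−1)) Σᵢ ‖ξᵢ − ξ̂ᵢ‖² ≤ ε₁ }. -/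
/-!
View the scenario vector `ξs ∈ Ξ^m` as one point `x` of a convex set `S`, the average of `g` as a
concave objective `f` and the average squared distance to `ξhat` as a convex constraint `c`.
The value function `φ t = sup {f x | x ∈ S, c x ≤ t}` is then concave and nondecreasing on its
domain, since a convex combination of feasible points is feasible for the combined budget.
The Slater point `ξhat` puts `ε₁ > 0` strictly inside that domain, so `φ` has a supergradient
`u ≥ 0` at `ε₁`, and `f x - u * c x ≤ φ (c x) - u * c x ≤ φ ε₁ - u * ε₁` for every `x ∈ S`:
the reverse of weak duality at `u`.
-/

open Set

section ConvexSum

variable {𝕜 E β ι : Type*} [Semiring 𝕜] [PartialOrder 𝕜] [AddCommMonoid E] [SMul 𝕜 E]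
  [AddCommMonoid β] [PartialOrder β] [IsOrderedAddMonoid β] [Module 𝕜 β] {s : Set E}

theorem ConvexOn.finset_sum (hs : Convex 𝕜 s) (t : Finset ι) {f : ι → E → β}
    (hf : ∀ i ∈ t, ConvexOn 𝕜 s (f i)) : ConvexOn 𝕜 s fun x => ∑ i ∈ t, f i x := by
  classical
  induction t using Finset.induction_on with
  | empty => simpa using convexOn_const (0 : β) hs
  | insert a t ha ih =>
    simp_rw [Finset.sum_insert ha]
    exact (hf a (Finset.mem_insert_self a t)).add
      (ih fun i hi => hf i (Finset.mem_insert_of_mem hi))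

theorem ConcaveOn.finset_sum (hs : Convex 𝕜 s) (t : Finset ι) {f : ι → E → β}
    (hf : ∀ i ∈ t, ConcaveOn 𝕜 s (f i)) : ConcaveOn 𝕜 s fun x => ∑ i ∈ t, f i x :=
  ConvexOn.finset_sum (β := βᵒᵈ) hs t hf

end ConvexSum

theorem convexOn_univ_norm_sub_sq {E : Type*} [NormedAddCommGroup E] [NormedSpace ℝ E] (a : E) :
    ConvexOn ℝ univ fun x => ‖x - a‖ ^ 2 := by
  simpa only [dist_eq_norm, Pi.pow_def] using (convexOn_univ_dist a).pow (fun _ _ => dist_nonneg) 2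

theorem mul_csSup_add_mul_csSup_le {A B : Set ℝ} (hA : A.Nonempty) (hA' : BddAbove A)
    (hB : B.Nonempty) (hB' : BddAbove B) {a b M : ℝ} (ha : 0 ≤ a) (hb : 0 ≤ b)
    (h : ∀ x ∈ A, ∀ y ∈ B, a * x + b * y ≤ M) : a * sSup A + b * sSup B ≤ M := by
  rw [← smul_eq_mul, ← smul_eq_mul, ← Real.sSup_smul_of_nonneg ha, ← Real.sSup_smul_of_nonneg hb,
    ← csSup_add (hA.smul_set) (hA'.smul_of_nonneg ha) (hB.smul_set) (hB'.smul_of_nonneg hb)]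
  refine csSup_le (hA.smul_set.add hB.smul_set) ?_
  rintro _ ⟨_, ⟨x, hx, rfl⟩, _, ⟨y, hy, rfl⟩, rfl⟩
  exact h x hx y hy

theorem ConcaveOn.exists_supergradient {D : Set ℝ} {φ : ℝ → ℝ} (hφ : ConcaveOn ℝ D φ)
    {a b c : ℝ} (ha : a ∈ D) (hc : c ∈ D) (hab : a < b) (hbc : b < c) :
    ∃ u, (φ c - φ b) / (c - b) ≤ u ∧ ∀ t ∈ D, φ t ≤ φ b + u * (t - b) := by
  set slopes := (fun t => (φ t - φ b) / (t - b)) '' (D ∩ Ioi b)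
  have hc_slope : (φ c - φ b) / (c - b) ∈ slopes := mem_image_of_mem _ ⟨hc, hbc⟩
  have hbdd : BddAbove slopes :=
    ⟨_, forall_mem_image.2 fun s hs => hφ.slope_anti_adjacent ha hs.1 hab hs.2⟩
  refine ⟨sSup slopes, le_csSup hbdd hc_slope, fun t ht => ?_⟩
  rcases lt_trichotomy t b with htb | rfl | hbt
  · have : sSup slopes ≤ (φ b - φ t) / (b - t) :=
      csSup_le ⟨_, hc_slope⟩
        (forall_mem_image.2 fun s hs => hφ.slope_anti_adjacent ht hs.1 htb hs.2)
    rw [le_div_iff₀ (sub_pos.2 htb)] at this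
    linarith
  · simp
  · have : (φ t - φ b) / (t - b) ≤ sSup slopes := le_csSup hbdd (mem_image_of_mem _ ⟨ht, hbt⟩)
    rw [div_le_iff₀ (sub_pos.2 hbt)] at this
    linarith

section LagrangianDuality

variable {E : Type*} {S : Set E} {f c : E → ℝ} {t u : ℝ}

noncomputable def constrainedSup (S : Set E) (f c : E → ℝ) (t : ℝ) : ℝ :=
  sSup (f '' {x ∈ S | c x ≤ t})

noncomputable def lagrangeDual (S : Set E) (f c : E → ℝ) (u : ℝ) : ℝ :=
  sSup ((fun x => f x - u * c x) '' S)

theorem le_constrainedSup (hfb : BddAbove (f '' S)) {x : E} (hx : x ∈ S) (ht : c x ≤ t) :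
    f x ≤ constrainedSup S f c t :=
  le_csSup (hfb.mono (image_mono (sep_subset _ _))) (mem_image_of_mem f ⟨hx, ht⟩)

theorem constrainedSup_le (hne : ∃ x ∈ S, c x ≤ t) {b : ℝ} (h : ∀ x ∈ S, c x ≤ t → f x ≤ b) :
    constrainedSup S f c t ≤ b := by
  obtain ⟨x, hx, hxt⟩ := hne
  exact csSup_le ⟨f x, mem_image_of_mem f ⟨hx, hxt⟩⟩ (forall_mem_image.2 fun y hy => h y hy.1 hy.2)

theorem monotoneOn_constrainedSup (hfb : BddAbove (f '' S)) :
    MonotoneOn (constrainedSup S f c) (upperClosure (c '' S)) := by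
  rintro s ⟨_, ⟨x, hx, rfl⟩, hxs⟩ t - hst
  exact constrainedSup_le ⟨x, hx, hxs⟩ fun y hy hys => le_constrainedSup hfb hy (hys.trans hst)

theorem bddAbove_lagrangian (hfb : BddAbove (f '' S)) (hcb : BddBelow (c '' S)) (hu : 0 ≤ u) :
    BddAbove ((fun x => f x - u * c x) '' S) := by
  obtain ⟨M, hM⟩ := hfb
  obtain ⟨L, hL⟩ := hcb
  refine ⟨M - u * L, forall_mem_image.2 fun x hx => ?_⟩
  have := hM (mem_image_of_mem f hx)
  have := mul_le_mul_of_nonneg_left (hL (mem_image_of_mem c hx)) hu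
  linarith

theorem constrainedSup_le_lagrangeDual (hfb : BddAbove (f '' S)) (hcb : BddBelow (c '' S))
    (hu : 0 ≤ u) (hne : ∃ x ∈ S, c x ≤ t) :
    constrainedSup S f c t ≤ u * t + lagrangeDual S f c u :=
  constrainedSup_le hne fun x hx hxt => by
    have : f x - u * c x ≤ lagrangeDual S f c u :=
      le_csSup (bddAbove_lagrangian hfb hcb hu) (mem_image_of_mem _ hx)
    have := mul_le_mul_of_nonneg_left hxt hu
    linarith

theorem add_lagrangeDual_le_constrainedSup (hfb : BddAbove (f '' S)) (hS : S.Nonempty)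
    (hu : ∀ s ∈ upperClosure (c '' S),
      constrainedSup S f c s ≤ constrainedSup S f c t + u * (s - t)) :
    u * t + lagrangeDual S f c u ≤ constrainedSup S f c t := by
  have : lagrangeDual S f c u ≤ constrainedSup S f c t - u * t :=
    csSup_le (hS.image _) (forall_mem_image.2 fun x hx => by
      have : f x ≤ constrainedSup S f c (c x) := le_constrainedSup hfb hx le_rfl
      have := hu (c x) (mem_upperClosure.2 ⟨c x, mem_image_of_mem c hx, le_rfl⟩)
      linarith)
  linarith

variable [AddCommGroup E] [Module ℝ E]

theorem concaveOn_constrainedSup (hf : ConcaveOn ℝ S f) (hc : ConvexOn ℝ S c)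
    (hfb : BddAbove (f '' S)) :
    ConcaveOn ℝ (upperClosure (c '' S)) (constrainedSup S f c) := by
  refine ⟨(upperClosure (c '' S)).upper.ordConnected.convex, ?_⟩
  rintro s ⟨_, ⟨x, hx, rfl⟩, hxs⟩ t ⟨_, ⟨y, hy, rfl⟩, hyt⟩ a b ha hb hab
  have hbdd : ∀ r, BddAbove (f '' {x ∈ S | c x ≤ r}) :=
    fun r => hfb.mono (image_mono (sep_subset _ _))
  rw [smul_eq_mul, smul_eq_mul]
  refine mul_csSup_add_mul_csSup_le (A := f '' {x ∈ S | c x ≤ s}) (B := f '' {x ∈ S | c x ≤ t})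
    ⟨f x, mem_image_of_mem f ⟨hx, hxs⟩⟩ (hbdd s)
    ⟨f y, mem_image_of_mem f ⟨hy, hyt⟩⟩ (hbdd t) ha hb ?_
  rintro _ ⟨x', ⟨hx', hx's⟩, rfl⟩ _ ⟨y', ⟨hy', hy't⟩, rfl⟩
  have hmem : a • x' + b • y' ∈ S := hf.1 hx' hy' ha hb hab
  calc a * f x' + b * f y' ≤ f (a • x' + b • y') := hf.2 hx' hy' ha hb hab
    _ ≤ constrainedSup S f c (a • s + b • t) := le_constrainedSup hfb hmem <| by
      calc c (a • x' + b • y') ≤ a • c x' + b • c y' := hc.2 hx' hy' ha hb hab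
        _ ≤ a • s + b • t := by gcongr

theorem iInf_lagrangeDual_eq_constrainedSup {ε : ℝ} (hf : ConcaveOn ℝ S f)
    (hc : ConvexOn ℝ S c) (hfb : BddAbove (f '' S)) (hcb : BddBelow (c '' S))
    (hslater : ∃ x ∈ S, c x < ε) :
    ⨅ u : {u : ℝ // 0 ≤ u}, ((u : ℝ) * ε + lagrangeDual S f c u) = constrainedSup S f c ε := by
  obtain ⟨x₀, hx₀, hcx₀⟩ := hslater
  have hfeas : ∃ x ∈ S, c x ≤ ε := ⟨x₀, hx₀, hcx₀.le⟩
  have hD : ∀ {s}, c x₀ ≤ s → s ∈ upperClosure (c '' S) :=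
    fun h => mem_upperClosure.2 ⟨_, mem_image_of_mem c hx₀, h⟩
  obtain ⟨u, hslope, hu⟩ := (concaveOn_constrainedSup hf hc hfb).exists_supergradient
    (hD le_rfl) (hD (by linarith)) hcx₀ (lt_add_one ε)
  have hu₀ : 0 ≤ u := by
    refine le_trans (div_nonneg (sub_nonneg.2 ?_) (by linarith)) hslope
    exact monotoneOn_constrainedSup hfb (hD hcx₀.le) (hD (by linarith)) (by linarith)
  have hweak : ∀ v : {u : ℝ // 0 ≤ u}, constrainedSup S f c ε ≤ v * ε + lagrangeDual S f c v :=
    fun v => constrainedSup_le_lagrangeDual hfb hcb v.2 hfeas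
  refine le_antisymm ?_ (le_ciInf hweak)
  exact (ciInf_le ⟨_, forall_mem_range.2 hweak⟩ ⟨u, hu₀⟩).trans
    (add_lagrangeDual_le_constrainedSup hfb ⟨x₀, hx₀⟩ hu)

end LagrangianDuality

theorem multi_scenario_duality_general {d m : ℕ}
    (Ξ : Set (EuclideanSpace ℝ (Fin d)))
    (hΞc : IsCompact Ξ) (hΞconv : Convex ℝ Ξ)
    (ξhat : Fin m → EuclideanSpace ℝ (Fin d)) (hξhat : ∀ i, ξhat i ∈ Ξ)
    (g : EuclideanSpace ℝ (Fin d) → ℝ)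
    (hgconc : ConcaveOn ℝ Set.univ g) (hgcont : Continuous g)
    (ε₁ : ℝ) (hε₁ : 0 < ε₁) :
    (⨅ u : {u : ℝ // 0 ≤ u},
        ((u : ℝ) * ε₁ + sSup {r : ℝ | ∃ ξs : Fin m → EuclideanSpace ℝ (Fin d),
          (∀ i, ξs i ∈ Ξ) ∧
          r = (1 / (m : ℝ)) * ∑ i, (g (ξs i) - (u : ℝ) * ‖ξs i - ξhat i‖ ^ 2)})) =
      sSup {r : ℝ | ∃ ξs : Fin m → EuclideanSpace ℝ (Fin d),
        (∀ i, ξs i ∈ Ξ) ∧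
        (1 / (m : ℝ)) * ∑ i, ‖ξs i - ξhat i‖ ^ 2 ≤ ε₁ ∧
        r = (1 / (m : ℝ)) * ∑ i, g (ξs i)} := by
  set S := Set.univ.pi fun _ : Fin m => Ξ
  set F := fun ξs : Fin m → EuclideanSpace ℝ (Fin d) => (1 / (m : ℝ)) * ∑ i, g (ξs i)
  set C := fun ξs : Fin m → EuclideanSpace ℝ (Fin d) => (1 / (m : ℝ)) * ∑ i, ‖ξs i - ξhat i‖ ^ 2
  have hS : Convex ℝ S := convex_pi fun _ _ => hΞconv
  have hF : ConcaveOn ℝ S F := (ConcaveOn.finset_sum hS Finset.univ fun i _ =>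
    (hgconc.comp_linearMap (LinearMap.proj i)).subset (subset_univ _) hS).smul (by positivity)
  have hC : ConvexOn ℝ S C := (ConvexOn.finset_sum hS Finset.univ fun i _ =>
    ((convexOn_univ_norm_sub_sq (ξhat i)).comp_linearMap (LinearMap.proj i)).subset
      (subset_univ _) hS).smul (by positivity)
  have hFb : BddAbove (F '' S) :=
    (isCompact_univ_pi fun _ => hΞc).bddAbove_image (by fun_prop)
  have hCb : BddBelow (C '' S) := ⟨0, forall_mem_image.2 fun _ _ => by positivity⟩
  have hslater : ∃ ξs ∈ S, C ξs < ε₁ := ⟨ξhat, fun i _ => hξhat i, by simpa [C] using hε₁⟩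
  have key := iInf_lagrangeDual_eq_constrainedSup hF hC hFb hCb hslater
  have hlag : ∀ (u : ℝ) ξs, (1 / (m : ℝ)) * ∑ i, (g (ξs i) - u * ‖ξs i - ξhat i‖ ^ 2)
      = F ξs - u * C ξs := fun u ξs => by
    simp only [F, C, Finset.sum_sub_distrib, ← Finset.mul_sum]
    ring
  convert key using 4
  · simp only [lagrangeDual, hlag]
    congr 1
    ext r
    simp only [mem_ofPred_eq, mem_image, S, mem_univ_pi, eq_comm]
  · simp only [constrainedSup]
    congr 1
    ext r
    simp only [mem_ofPred_eq, mem_image, S, mem_univ_pi, eq_comm, and_assoc, F, C]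

/-- Multi-scenario Lagrangian strong duality used in Theorem 2 of the paper. -/
theorem multi_scenario_duality {d m : ℕ} (hm : 0 < m)
    (Ξ : Set (EuclideanSpace ℝ (Fin d)))
    (hΞc : IsCompact Ξ) (hΞconv : Convex ℝ Ξ)
    (ξhat : Fin m → EuclideanSpace ℝ (Fin d)) (hξhat : ∀ i, ξhat i ∈ Ξ)
    (g : EuclideanSpace ℝ (Fin d) → ℝ)
    (hgconc : ConcaveOn ℝ Set.univ g) (hgcont : Continuous g)
    (ε₁ : ℝ) (hε₁ : 0 < ε₁) :
    (⨅ u : {u : ℝ // 0 ≤ u},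
        ((u : ℝ) * ε₁ + sSup {r : ℝ | ∃ ξs : Fin m → EuclideanSpace ℝ (Fin d),
          (∀ i, ξs i ∈ Ξ) ∧
          r = (1 / (m : ℝ)) * ∑ i, (g (ξs i) - (u : ℝ) * ‖ξs i - ξhat i‖ ^ 2)})) =
      sSup {r : ℝ | ∃ ξs : Fin m → EuclideanSpace ℝ (Fin d),
        (∀ i, ξs i ∈ Ξ) ∧
        (1 / (m : ℝ)) * ∑ i, ‖ξs i - ξhat i‖ ^ 2 ≤ ε₁ ∧
        r = (1 / (m : ℝ)) * ∑ i, g (ξs i)} :=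
  multi_scenario_duality_general Ξ hΞc hΞconv ξhat hξhat g hgconc hgcont ε₁ hε₁
end
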